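/- Fundamental Theorem: Given any three distinct points P, Q, R on a line l, and any three distinct points P', Q', R' on a line m, there exists a projectivity π from the range of l to the range of m with π(P) = P', π(Q) = Q', π(R) = R'; moreover π is unique, in the sense that any two projectivities from the range of l to the range of m sending P, Q, R to P', Q', R' respectively agree at every point of l. -/

import Mathlib

/-!
If two projectivities `f, g` from `l` to `m` agree at three points, then `g⁻¹ ∘ f` (the inverse of a
composite of perspectivities is again one) is a projectivity of `l` onto itself with three fixed
points, hence the identity by Axiom T. For existence, a single perspectivity suffices between two
lines whose common point is to be sent to itself; the general case reduces to this one by first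
projecting onto suitable auxiliary lines.
-/

open Configuration

universe u
variable (P L : Type u) [Membership P L]

/-- Three points are collinear if some line passes through all three. -/
def Col (A B C : P) : Prop := ∃ l : L, A ∈ l ∧ B ∈ l ∧ C ∈ l

/-- Every line of `L` is incident with at least `n` distinct points. -/
def LinesHaveAtLeast (n : ℕ) : Prop :=
  ∀ l : L, ∃ s : Finset P, n ≤ s.card ∧ ∀ X ∈ s, X ∈ l

/-- The range of a line `l` : the points incident with `l`. -/
abbrev Rng (l : L) : Type _ := {X : P // X ∈ l}

/-- `f` is the perspectivity from the range of `l` to the range of `m` with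
center `O`, a point outside both `l` and `m` : each point `X` of `l` is mapped
to the point `(OX)·m`, i.e. `O`, `X` and `f X` are collinear. -/
def IsPerspectivity (l m : L) (f : Rng P L l → Rng P L m) : Prop :=
  ∃ O : P, O ∉ l ∧ O ∉ m ∧
    ∀ X : Rng P L l, ∃ k : L, O ∈ k ∧ (X : P) ∈ k ∧ ((f X : P)) ∈ k

/-- A projectivity between ranges of lines : a composite of finitely many
perspectivities. -/
inductive IsProjectivity : (l m : L) → (Rng P L l → Rng P L m) → Prop where
  | persp {l m : L} {f : Rng P L l → Rng P L m} :
      IsPerspectivity P L l m f → IsProjectivity l m f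
  | comp {l m n : L} {f : Rng P L l → Rng P L m} {g : Rng P L m → Rng P L n} :
      IsProjectivity l m f → IsProjectivity m n g → IsProjectivity l n (g ∘ f)

/-- The pencil of a point `U` : the lines incident with `U`. -/
abbrev Pcl (U : P) : Type _ := {k : L // U ∈ k}

/-- `f` is the perspectivity from the pencil of `U` to the pencil of `V` with
axis `a`, a line avoiding both `U` and `V` : each line `k` through `U` is mapped
to the line joining `V` to `k·a`, i.e. `k`, `a` and `f k` are concurrent. -/
def IsPencilPerspectivity (U V : P) (f : Pcl P L U → Pcl P L V) : Prop :=
  ∃ a : L, U ∉ a ∧ V ∉ a ∧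
    ∀ k : Pcl P L U, ∃ X : P, X ∈ (k : L) ∧ X ∈ a ∧ X ∈ ((f k : L))

/-- A projectivity between pencils of points : a composite of finitely many
perspectivities between pencils. -/
inductive IsPencilProjectivity : (U V : P) → (Pcl P L U → Pcl P L V) → Prop where
  | persp {U V : P} {f : Pcl P L U → Pcl P L V} :
      IsPencilPerspectivity P L U V f → IsPencilProjectivity U V f
  | comp {U V W : P} {f : Pcl P L U → Pcl P L V} {g : Pcl P L V → Pcl P L W} :
      IsPencilProjectivity U V f → IsPencilProjectivity V W g →
      IsPencilProjectivity U W (g ∘ f)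

/-- Axiom T: every projectivity of the range of a line (or of the pencil of
lines through a point) onto itself having three distinct fixed elements is the
identity. -/
def AxiomT : Prop :=
  (∀ (l : L) (f : Rng P L l → Rng P L l), IsProjectivity P L l l f →
    (∃ X Y Z : Rng P L l, X ≠ Y ∧ X ≠ Z ∧ Y ≠ Z ∧ f X = X ∧ f Y = Y ∧ f Z = Z) →
    ∀ W, f W = W) ∧
  (∀ (U : P) (g : Pcl P L U → Pcl P L U), IsPencilProjectivity P L U U g →
    (∃ x y z : Pcl P L U, x ≠ y ∧ x ≠ z ∧ y ≠ z ∧ g x = x ∧ g y = y ∧ g z = z) →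
    ∀ w, g w = w)

namespace LinesHaveAtLeast

variable {P L}

theorem mono {n k : ℕ} (h : LinesHaveAtLeast P L n) (hkn : k ≤ n) : LinesHaveAtLeast P L k :=
  fun l => (h l).imp fun _ hs => ⟨hkn.trans hs.1, hs.2⟩

theorem exists_mem_ne_ne (h : LinesHaveAtLeast P L 3) (l : L) (a b : P) :
    ∃ X : P, X ∈ l ∧ X ≠ a ∧ X ≠ b := by
  classical
  obtain ⟨s, hs, hsl⟩ := h l
  obtain ⟨X, hXs, hXab⟩ := Finset.exists_mem_notMem_of_card_lt_card
    ((Finset.card_le_two (a := a) (b := b)).trans_lt hs)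
  simp only [Finset.mem_insert, Finset.mem_singleton, not_or] at hXab
  exact ⟨X, hsl X hXs, hXab⟩

theorem exists_three (h : LinesHaveAtLeast P L 3) (l : L) :
    ∃ X Y Z : Rng P L l, X ≠ Y ∧ X ≠ Z ∧ Y ≠ Z := by
  obtain ⟨s, hs, hsl⟩ := h l
  obtain ⟨X, hX, Y, hY, Z, hZ, hXY, hXZ, hYZ⟩ := Finset.two_lt_card.mp hs
  exact ⟨⟨X, hsl X hX⟩, ⟨Y, hsl Y hY⟩, ⟨Z, hsl Z hZ⟩, Subtype.coe_ne_coe.mp hXY,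
    Subtype.coe_ne_coe.mp hXZ, Subtype.coe_ne_coe.mp hYZ⟩

end LinesHaveAtLeast

section Incidence

variable {P L} [Nondegenerate P L] {X Y O : P} {l m k k' : L}

theorem point_eq_of_mem_of_mem (hlm : l ≠ m) (hXl : X ∈ l) (hXm : X ∈ m) (hYl : Y ∈ l)
    (hYm : Y ∈ m) : X = Y :=
  (Nondegenerate.eq_or_eq hXl hYl hXm hYm).resolve_right hlm

theorem line_eq_of_mem_of_mem (hXY : X ≠ Y) (hXl : X ∈ l) (hYl : Y ∈ l) (hXm : X ∈ m)
    (hYm : Y ∈ m) : l = m :=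
  (Nondegenerate.eq_or_eq hXl hYl hXm hYm).resolve_left hXY

theorem notMem_of_mem_join_of_mem_join {Y Z Y' Z' : P} (hYl : Y ∈ l) (hZl : Z ∈ l) (hYZ : Y ≠ Z)
    (hY'l : Y' ∉ l) (hZ'l : Z' ∉ l) (hYk : Y ∈ k) (hY'k : Y' ∈ k) (hOk : O ∈ k)
    (hZk' : Z ∈ k') (hZ'k' : Z' ∈ k') (hOk' : O ∈ k') : O ∉ l := by
  intro hOl
  by_cases hOY : O = Y
  · subst hOY
    exact hZ'l (line_eq_of_mem_of_mem hYZ hOk' hZk' hOl hZl ▸ hZ'k')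
  · exact hY'l (line_eq_of_mem_of_mem hOY hOk hYk hOl hYl ▸ hY'k)

end Incidence

section Perspectivity

open HasPoints HasLines

variable {P L}

variable (P) in
theorem exists_line_ne_ne [ProjectivePlane P L] (l m : L) : ∃ n : L, n ≠ l ∧ n ≠ m := by
  obtain ⟨-, p₂, p₃, l₁, l₂, l₃, -, -, h₂₁, h₂₂, h₂₃, -, h₃₂, h₃₃⟩ :=
    ProjectivePlane.exists_config (P := P) (L := L)
  have h₁₂ : l₁ ≠ l₂ := fun h => h₂₁ (h ▸ h₂₂)
  have h₁₃ : l₁ ≠ l₃ := fun h => h₂₁ (h ▸ h₂₃)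
  have h₂₃' : l₂ ≠ l₃ := fun h => h₃₃ (h ▸ h₃₂)
  by_contra! h
  rcases eq_or_ne l₁ l with rfl | h₁
  · exact h₂₃' ((h l₂ h₁₂.symm).trans (h l₃ h₁₃.symm).symm)
  rcases eq_or_ne l₂ l with rfl | h₂
  · exact h₁₃ ((h l₁ h₁).trans (h l₃ h₂₃'.symm).symm)
  · exact h₁₂ ((h l₁ h₁).trans (h l₂ h₂).symm)

variable [ProjectivePlane P L] {l m : L} {O : P}

theorem exists_line_through_ne_ne (h3 : LinesHaveAtLeast P L 3) {A : P} (hl : A ∈ l) (hm : A ∈ m) :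
    ∃ n : L, A ∈ n ∧ n ≠ l ∧ n ≠ m := by
  obtain ⟨k, hAk⟩ := Nondegenerate.exists_line (L := L) A
  have hkl : k ≠ l := fun h => hAk (h ▸ hl)
  have hkm : k ≠ m := fun h => hAk (h ▸ hm)
  obtain ⟨X, hXk, hXl, hXm⟩ := h3.exists_mem_ne_ne k (mkPoint hkl) (mkPoint hkm)
  have hAX : A ≠ X := fun h => hAk (h ▸ hXk)
  refine ⟨mkLine hAX, (mkLine_ax hAX).1, fun h => hXl ?_, fun h => hXm ?_⟩
  · exact point_eq_of_mem_of_mem hkl hXk (h ▸ (mkLine_ax hAX).2) (mkPoint_ax hkl).1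
      (mkPoint_ax hkl).2
  · exact point_eq_of_mem_of_mem hkm hXk (h ▸ (mkLine_ax hAX).2) (mkPoint_ax hkm).1
      (mkPoint_ax hkm).2

noncomputable def perspectivity (hOl : O ∉ l) (hOm : O ∉ m) (X : Rng P L l) : Rng P L m :=
  have hOX : O ≠ X := fun h => hOl (h ▸ X.2)
  have hm : mkLine hOX ≠ m := fun h => hOm (h ▸ (mkLine_ax hOX).1)
  ⟨mkPoint hm, (mkPoint_ax hm).2⟩

variable (hOl : O ∉ l) (hOm : O ∉ m)

theorem exists_line_perspectivity (X : Rng P L l) :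
    ∃ k : L, O ∈ k ∧ (X : P) ∈ k ∧ (perspectivity hOl hOm X : P) ∈ k :=
  ⟨_, (mkLine_ax _).1, (mkLine_ax _).2, (mkPoint_ax _).1⟩

theorem perspectivity_eq_of_mem {X : Rng P L l} {Y : P} (hYm : Y ∈ m) {k : L} (hOk : O ∈ k)
    (hXk : (X : P) ∈ k) (hYk : Y ∈ k) : perspectivity hOl hOm X = ⟨Y, hYm⟩ := by
  obtain ⟨k', hOk', hXk', hX'k'⟩ := exists_line_perspectivity hOl hOm X
  have hkm : k' ≠ m := fun h => hOm (h ▸ hOk')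
  have hOX : O ≠ X := fun h => hOl (h ▸ X.2)
  have hkk' : k = k' := line_eq_of_mem_of_mem hOX hOk hXk hOk' hXk'
  exact Subtype.ext (point_eq_of_mem_of_mem hkm hX'k' (perspectivity hOl hOm X).2 (hkk' ▸ hYk) hYm)

theorem isPerspectivity_perspectivity : IsPerspectivity P L l m (perspectivity hOl hOm) :=
  ⟨O, hOl, hOm, exists_line_perspectivity hOl hOm⟩

theorem perspectivity_perspectivity (X : Rng P L l) :
    perspectivity hOm hOl (perspectivity hOl hOm X) = X := by
  obtain ⟨k, hOk, hXk, hX'k⟩ := exists_line_perspectivity hOl hOm X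
  exact perspectivity_eq_of_mem hOm hOl X.2 hOk hX'k hXk

end Perspectivity

section Projectivity

open Function

variable {P L} [ProjectivePlane P L] {l m : L}

theorem IsPerspectivity.eq_perspectivity {f : Rng P L l → Rng P L m}
    (hf : IsPerspectivity P L l m f) :
    ∃ (O : P) (hOl : O ∉ l) (hOm : O ∉ m), f = perspectivity hOl hOm := by
  obtain ⟨O, hOl, hOm, hcol⟩ := hf
  refine ⟨O, hOl, hOm, funext fun X => ?_⟩
  obtain ⟨k, hOk, hXk, hfXk⟩ := hcol X
  exact (perspectivity_eq_of_mem hOl hOm (f X).2 hOk hXk hfXk).symm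

theorem IsProjectivity.exists_inverse {f : Rng P L l → Rng P L m}
    (hf : IsProjectivity P L l m f) :
    ∃ g : Rng P L m → Rng P L l, IsProjectivity P L m l g ∧ LeftInverse g f ∧ RightInverse g f := by
  induction hf with
  | persp hf =>
    obtain ⟨O, hOl, hOm, rfl⟩ := hf.eq_perspectivity
    exact ⟨perspectivity hOm hOl, .persp (isPerspectivity_perspectivity hOm hOl),
      perspectivity_perspectivity hOl hOm, perspectivity_perspectivity hOm hOl⟩
  | comp _ _ ihf ihg =>
    obtain ⟨f', hf', hf'l, hf'r⟩ := ihf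
    obtain ⟨g', hg', hg'l, hg'r⟩ := ihg
    exact ⟨f' ∘ g', .comp hg' hf', hg'l.comp hf'l, hg'r.comp hf'r⟩

theorem IsProjectivity.injective {f : Rng P L l → Rng P L m} (hf : IsProjectivity P L l m f) :
    Injective f :=
  let ⟨_, _, hleft, _⟩ := hf.exists_inverse
  hleft.injective

theorem IsProjectivity.eq_of_eq_on_three (hT : AxiomT P L) {f g : Rng P L l → Rng P L m}
    (hf : IsProjectivity P L l m f) (hg : IsProjectivity P L l m g) {X Y Z : Rng P L l}
    (hXY : X ≠ Y) (hXZ : X ≠ Z) (hYZ : Y ≠ Z) (hX : f X = g X) (hY : f Y = g Y)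
    (hZ : f Z = g Z) : f = g := by
  obtain ⟨g', hg', hleft, hright⟩ := hg.exists_inverse
  have hfix : ∀ W, g' (f W) = W := hT.1 l (g' ∘ f) (hf.comp hg')
    ⟨X, Y, Z, hXY, hXZ, hYZ, by simp [hX, hleft X], by simp [hY, hleft Y], by simp [hZ, hleft Z]⟩
  funext W
  rw [← hright (f W), hfix]

end Projectivity

section Existence

open HasPoints HasLines

variable {P L} [ProjectivePlane P L] {l m : L} {X Y Z : Rng P L l} {X' Y' Z' : Rng P L m}

/-- When `l` and `m` meet at `X = X'`, the center is the intersection of `YY'` and `ZZ'`. -/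
theorem exists_isPerspectivity_of_coe_eq (hlm : l ≠ m) (hX : (X : P) = X') (hXY : X ≠ Y)
    (hXZ : X ≠ Z) (hYZ : Y ≠ Z) (hXY' : X' ≠ Y') (hXZ' : X' ≠ Z') (hYZ' : Y' ≠ Z') :
    ∃ f, IsPerspectivity P L l m f ∧ f X = X' ∧ f Y = Y' ∧ f Z = Z' := by
  have hXm : (X : P) ∈ m := hX ▸ X'.2
  have hX'l : (X' : P) ∈ l := hX ▸ X.2
  have hYm : (Y : P) ∉ m := fun h =>
    hXY (Subtype.ext (point_eq_of_mem_of_mem hlm X.2 hXm Y.2 h))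
  have hZm : (Z : P) ∉ m := fun h =>
    hXZ (Subtype.ext (point_eq_of_mem_of_mem hlm X.2 hXm Z.2 h))
  have hY'l : (Y' : P) ∉ l := fun h =>
    hXY' (Subtype.ext (point_eq_of_mem_of_mem hlm hX'l X'.2 h Y'.2))
  have hZ'l : (Z' : P) ∉ l := fun h =>
    hXZ' (Subtype.ext (point_eq_of_mem_of_mem hlm hX'l X'.2 h Z'.2))
  obtain ⟨k, hYk, hY'k⟩ := (existsUnique_line P L Y Y' fun h => hY'l (h ▸ Y.2)).exists
  obtain ⟨k', hZk', hZ'k'⟩ := (existsUnique_line P L Z Z' fun h => hZ'l (h ▸ Z.2)).exists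
  have hkk' : k ≠ k' := fun h =>
    hY'l (line_eq_of_mem_of_mem (Subtype.coe_ne_coe.mpr hYZ) hYk (h ▸ hZk') Y.2 Z.2 ▸ hY'k)
  obtain ⟨O, hOk, hOk'⟩ := (existsUnique_point P L k k' hkk').exists
  have hOl : O ∉ l := notMem_of_mem_join_of_mem_join Y.2 Z.2 (Subtype.coe_ne_coe.mpr hYZ)
    hY'l hZ'l hYk hY'k hOk hZk' hZ'k' hOk'
  have hOm : O ∉ m := notMem_of_mem_join_of_mem_join Y'.2 Z'.2 (Subtype.coe_ne_coe.mpr hYZ')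
    hYm hZm hY'k hYk hOk hZ'k' hZk' hOk'
  obtain ⟨j, hOj, hXj, -⟩ := exists_line_perspectivity hOl hOm X
  exact ⟨perspectivity hOl hOm, isPerspectivity_perspectivity hOl hOm,
    perspectivity_eq_of_mem hOl hOm X'.2 hOj hXj (hX ▸ hXj),
    perspectivity_eq_of_mem hOl hOm Y'.2 hOk hYk hY'k,
    perspectivity_eq_of_mem hOl hOm Z'.2 hOk' hZk' hZ'k'⟩

/-- Project `l` from a point `O` of `XX'` onto a line `n ∋ X'`, which moves `X` to `X'`; then
`n` and `m` meet at `X'`. -/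
theorem exists_isProjectivity_of_notMem (h3 : LinesHaveAtLeast P L 3) (hXY : X ≠ Y)
    (hXZ : X ≠ Z) (hYZ : Y ≠ Z) (hXY' : X' ≠ Y') (hXZ' : X' ≠ Z') (hYZ' : Y' ≠ Z')
    (hX'l : (X' : P) ∉ l) :
    ∃ f, IsProjectivity P L l m f ∧ f X = X' ∧ f Y = Y' ∧ f Z = Z' := by
  have hXX' : (X : P) ≠ X' := fun h => hX'l (h ▸ X.2)
  obtain ⟨k, hXk, hX'k⟩ := (existsUnique_line P L _ _ hXX').exists
  obtain ⟨n, hX'n, hnm, hnk⟩ := exists_line_through_ne_ne h3 X'.2 hX'k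
  obtain ⟨O, hOk, hOX, hOX'⟩ := h3.exists_mem_ne_ne k X X'
  have hkl : k ≠ l := fun h => hX'l (h ▸ hX'k)
  have hXn : (X : P) ∉ n := fun h => hnk (line_eq_of_mem_of_mem hXX' h hX'n hXk hX'k)
  have hkn : k ≠ n := fun h => hXn (h ▸ hXk)
  have hOl : O ∉ l := fun h => hOX (point_eq_of_mem_of_mem hkl hOk h hXk X.2)
  have hOn : O ∉ n := fun h => hOX' (point_eq_of_mem_of_mem hkn hOk h hX'k hX'n)
  have hf₁ := IsProjectivity.persp (isPerspectivity_perspectivity hOl hOn)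
  have hf₁X : perspectivity hOl hOn X = ⟨X', hX'n⟩ :=
    perspectivity_eq_of_mem hOl hOn hX'n hOk hXk hX'k
  obtain ⟨f₂, hf₂, hX, hY, hZ⟩ := exists_isPerspectivity_of_coe_eq hnm
    (congrArg Subtype.val hf₁X) (hf₁.injective.ne hXY) (hf₁.injective.ne hXZ)
    (hf₁.injective.ne hYZ) hXY' hXZ' hYZ'
  exact ⟨f₂ ∘ perspectivity hOl hOn, hf₁.comp (.persp hf₂), hX, hY, hZ⟩

theorem exists_isProjectivity_of_ne (h3 : LinesHaveAtLeast P L 3) (hlm : l ≠ m) (hXY : X ≠ Y)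
    (hXZ : X ≠ Z) (hYZ : Y ≠ Z) (hXY' : X' ≠ Y') (hXZ' : X' ≠ Z') (hYZ' : Y' ≠ Z') :
    ∃ f, IsProjectivity P L l m f ∧ f X = X' ∧ f Y = Y' ∧ f Z = Z' := by
  by_cases hX'l : (X' : P) ∈ l
  · have hY'l : (Y' : P) ∉ l := fun h =>
      hXY' (Subtype.ext (point_eq_of_mem_of_mem hlm hX'l X'.2 h Y'.2))
    obtain ⟨f, hf, hY, hX, hZ⟩ := exists_isProjectivity_of_notMem h3 hXY.symm hYZ hXZ
      hXY'.symm hYZ' hXZ' hY'l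
    exact ⟨f, hf, hX, hY, hZ⟩
  · exact exists_isProjectivity_of_notMem h3 hXY hXZ hYZ hXY' hXZ' hYZ' hX'l

theorem exists_isProjectivity (h3 : LinesHaveAtLeast P L 3) (hXY : X ≠ Y) (hXZ : X ≠ Z)
    (hYZ : Y ≠ Z) (hXY' : X' ≠ Y') (hXZ' : X' ≠ Z') (hYZ' : Y' ≠ Z') :
    ∃ f, IsProjectivity P L l m f ∧ f X = X' ∧ f Y = Y' ∧ f Z = Z' := by
  obtain ⟨n, hnl, hnm⟩ := exists_line_ne_ne P l m
  obtain ⟨U, V, W, hUV, hUW, hVW⟩ := h3.exists_three n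
  obtain ⟨f, hf, hfX, hfY, hfZ⟩ := exists_isProjectivity_of_ne h3 hnl.symm hXY hXZ hYZ hUV hUW hVW
  obtain ⟨g, hg, hgU, hgV, hgW⟩ := exists_isProjectivity_of_ne h3 hnm hUV hUW hVW hXY' hXZ' hYZ'
  exact ⟨g ∘ f, hf.comp hg, by simp [hfX, hgU], by simp [hfY, hgV], by simp [hfZ, hgW]⟩

end Existence

/-- **Fundamental Theorem.** Given any three distinct points `A, B, C` on a
line `l`, and any three distinct points `A', B', C'` on a line `m`, there
exists a projectivity from the range of `l` to the range of `m` sending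
`A, B, C` to `A', B', C'` respectively; moreover it is unique, in the sense
that any two projectivities from the range of `l` to the range of `m` sending
`A, B, C` to `A', B', C'` respectively agree at every point of `l`. -/
theorem fundamental_theorem
    [Configuration.ProjectivePlane P L]
    (h6 : LinesHaveAtLeast P L 6) (hT : AxiomT P L)
    (l m : L)
    (A B C : P) (hA : A ∈ l) (hB : B ∈ l) (hC : C ∈ l)
    (hAB : A ≠ B) (hAC : A ≠ C) (hBC : B ≠ C)
    (A' B' C' : P) (hA' : A' ∈ m) (hB' : B' ∈ m) (hC' : C' ∈ m)
    (hAB' : A' ≠ B') (hAC' : A' ≠ C') (hBC' : B' ≠ C') :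
    (∃ f : Rng P L l → Rng P L m, IsProjectivity P L l m f ∧
      f ⟨A, hA⟩ = ⟨A', hA'⟩ ∧ f ⟨B, hB⟩ = ⟨B', hB'⟩ ∧ f ⟨C, hC⟩ = ⟨C', hC'⟩) ∧
    ∀ f g : Rng P L l → Rng P L m,
      IsProjectivity P L l m f → IsProjectivity P L l m g →
      f ⟨A, hA⟩ = ⟨A', hA'⟩ → f ⟨B, hB⟩ = ⟨B', hB'⟩ → f ⟨C, hC⟩ = ⟨C', hC'⟩ →
      g ⟨A, hA⟩ = ⟨A', hA'⟩ → g ⟨B, hB⟩ = ⟨B', hB'⟩ → g ⟨C, hC⟩ = ⟨C', hC'⟩ →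
      ∀ X : Rng P L l, f X = g X := by
  have hAB₁ : (⟨A, hA⟩ : Rng P L l) ≠ ⟨B, hB⟩ := Subtype.coe_ne_coe.mp hAB
  have hAC₁ : (⟨A, hA⟩ : Rng P L l) ≠ ⟨C, hC⟩ := Subtype.coe_ne_coe.mp hAC
  have hBC₁ : (⟨B, hB⟩ : Rng P L l) ≠ ⟨C, hC⟩ := Subtype.coe_ne_coe.mp hBC
  refine ⟨exists_isProjectivity (h6.mono (by norm_num)) hAB₁ hAC₁ hBC₁
    (Subtype.coe_ne_coe.mp hAB') (Subtype.coe_ne_coe.mp hAC') (Subtype.coe_ne_coe.mp hBC'), ?_⟩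
  intro f g hf hg hfA hfB hfC hgA hgB hgC
  exact congrFun (hf.eq_of_eq_on_three hT hg hAB₁ hAC₁ hBC₁ (hfA.trans hgA.symm)
    (hfB.trans hgB.symm) (hfC.trans hgC.symm))
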